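/- Let π be a permutation of {1,...,n} with all displacements π(i) − i in {−2, −1, j−2} for some j ≥ 3, and suppose r is the smallest index greater than 1 with π(r) − r = j − 2 (assuming such r exists). Then the word obtained by deleting positions 1 through r−1 from π and relabeling values (subtracting r−1 from each value greater than j−1, and replacing each of the values 1,...,r−2 appropriately) yields a permutation π' of {1,...,n−r+1} all of whose displacements lie in {−2, −1, j−2}. -/

import Mathlib

/-!
Use 0-based positions and put `s = r - 1`. The displacement at `0` can only be `j - 2`, so
`π 0 = j - 2`; injectivity and the minimality of `s` then force `π i = i - 1` for `0 < i < s`,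
and `s < j`. As `π s = s + j - 2`, the value `i - 2` for `s < i < j` can only be taken at
position `i`, so `π i = i - 2` there; thus every value `≤ j - 2` is taken below position `j`,
and `π p ≥ j - 1` for `p ≥ j`. No position `p ≥ s` carries one of the values `0, …, s - 2, j - 2`,
so closing these gaps in `t ↦ π (t + s)` gives a permutation, whose displacements are read off
the three ranges: `j - 2` at `0`, `-1` for `0 < t < j - s`, and those of `π` beyond.
-/

open Set

namespace Equiv.Perm

variable {n : ℕ}

def natExtend (π : Perm (Fin n)) (i : ℕ) : ℕ :=
  if h : i < n then π ⟨i, h⟩ else i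

theorem natExtend_of_lt (π : Perm (Fin n)) {i : ℕ} (h : i < n) :
    π.natExtend i = π ⟨i, h⟩ :=
  dif_pos h

theorem bijOn_natExtend (π : Perm (Fin n)) : BijOn π.natExtend (Iio n) (Iio n) := by
  refine ⟨fun i hi => ?_, fun i hi k hk hik => ?_, fun v hv => ?_⟩
  · rw [mem_Iio, natExtend_of_lt π hi]
    exact (π _).isLt
  · rw [natExtend_of_lt π hi, natExtend_of_lt π hk] at hik
    exact congrArg Fin.val (π.injective (Fin.ext hik))
  · refine ⟨π.symm ⟨v, hv⟩, (π.symm _).isLt, ?_⟩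
    simp [natExtend_of_lt π (π.symm _).isLt]

noncomputable def ofBijOn {g : ℕ → ℕ} (h : BijOn g (Iio n) (Iio n)) : Perm (Fin n) :=
  (Fin.equivSubtype.trans (h.equiv g)).trans Fin.equivSubtype.symm

@[simp]
theorem ofBijOn_apply_val {g : ℕ → ℕ} (h : BijOn g (Iio n) (Iio n)) (i : Fin n) :
    (ofBijOn h i : ℕ) = g i :=
  rfl

end Equiv.Perm

-- Closes the gaps left in `ℕ` by deleting the values `0, …, s - 2` and `j - 2`.
def reduceValue (s j v : ℕ) : ℕ :=
  if v + 2 < j then v + 1 - s else v - s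

theorem injOn_reduceValue {s j : ℕ} (hsj : s < j) :
    InjOn (reduceValue s j) {v | s ≤ v + 1 ∧ v + 2 ≠ j} := by
  intro v ⟨hv, hvj⟩ w ⟨hw, hwj⟩ h
  simp only [reduceValue] at h
  split_ifs at h <;> omega

-- `f i - i ∈ {-2, -1, j - 2}` for every `i < n`, written without truncated subtraction.
def DisplacementsIn (n j : ℕ) (f : ℕ → ℕ) : Prop :=
  ∀ i < n, f i + 2 = i ∨ f i + 1 = i ∨ f i + 2 = i + j

namespace DisplacementsIn

theorem natCast_sub_natCast_mem_iff (a b j : ℕ) :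
    (a : ℤ) - b ∈ ({-2, -1, (j : ℤ) - 2} : Set ℤ) ↔ a + 2 = b ∨ a + 1 = b ∨ a + 2 = b + j := by
  simp only [mem_insert_iff, mem_singleton_iff]
  omega

variable {n j s : ℕ} {f : ℕ → ℕ}

theorem apply_zero (hd : DisplacementsIn n j f) (hn : 0 < n) : f 0 + 2 = j := by
  have := hd 0 hn
  omega

theorem apply_ne_of_pos (hd : DisplacementsIn n j f) (hf : InjOn f (Iio n)) {p : ℕ}
    (hp : 0 < p) (hpn : p < n) : f p + 2 ≠ j := by
  intro h
  have := hd.apply_zero (hp.trans hpn)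
  have := hf (mem_Iio.mpr hpn) (mem_Iio.mpr (hp.trans hpn)) (by omega : f p = f 0)
  omega

theorem apply_of_lt_first (hd : DisplacementsIn n j f) (hf : InjOn f (Iio n))
    (hmin : ∀ i, 1 ≤ i → i < s → f i + 2 ≠ i + j) {i : ℕ} (hi : 1 ≤ i) (his : i < s)
    (hin : i < n) : f i + 1 = i := by
  induction i, hi using Nat.le_induction with
  | base => have := hd 1 hin; have := hmin 1 le_rfl his; omega
  | succ i hi ih =>
    have hprev := ih (by omega) (by omega)
    rcases hd (i + 1) hin with h | h | h
    · have := hf (mem_Iio.mpr (by omega)) (mem_Iio.mpr hin) (by omega : f i = f (i + 1))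
      omega
    · exact h
    · exact absurd h (hmin _ (by omega) his)

theorem first_lt (hd : DisplacementsIn n j f) (hf : InjOn f (Iio n))
    (hmin : ∀ i, 1 ≤ i → i < s → f i + 2 ≠ i + j) (hsn : s < n) : s < j := by
  have hj := hd.apply_zero (by omega)
  by_contra! hjs
  have := hd.apply_of_lt_first hf hmin (i := j - 1) (by omega) (by omega) (by omega)
  exact hd.apply_ne_of_pos hf (p := j - 1) (by omega) (by omega) (by omega)

theorem first_le_apply_add_one (hd : DisplacementsIn n j f) (hf : InjOn f (Iio n))
    (hmin : ∀ i, 1 ≤ i → i < s → f i + 2 ≠ i + j) {p : ℕ} (hsp : s ≤ p) (hpn : p < n) :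
    s ≤ f p + 1 := by
  by_contra! hps
  have hq := hd.apply_of_lt_first hf hmin (i := f p + 1) (by omega) hps (by omega)
  have := hf (mem_Iio.mpr hpn) (mem_Iio.mpr (by omega)) (by omega : f p = f (f p + 1))
  omega

theorem apply_of_first_lt_of_lt (hd : DisplacementsIn n j f) (hf : BijOn f (Iio n) (Iio n))
    (hs1 : 1 ≤ s) (hs : f s + 2 = s + j) {i : ℕ} (hsi : s < i) (hij : i < j) (hin : i < n) :
    f i + 2 = i := by
  induction i using Nat.strong_induction_on with
  | _ i ih =>
    obtain ⟨k, hk, hfk⟩ := hf.surjOn (mem_Iio.mpr (by omega : i - 2 < n))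
    rw [mem_Iio] at hk
    rcases hd k hk with h | h | h
    · rw [← show k = i by omega]
      omega
    · by_cases hks : k = s
      · subst hks
        omega
      · have := ih k (by omega) (by omega) (by omega) hk
        omega
    · omega

theorem le_apply_add_one_of_le (hd : DisplacementsIn n j f) (hf : BijOn f (Iio n) (Iio n))
    (hmin : ∀ i, 1 ≤ i → i < s → f i + 2 ≠ i + j) (hs1 : 1 ≤ s) (hs : f s + 2 = s + j)
    {p : ℕ} (hjp : j ≤ p) (hpn : p < n) : j ≤ f p + 1 := by
  by_contra! hpj
  have h0 := hd.apply_ne_of_pos hf.injOn (p := p) (by omega) hpn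
  obtain ⟨q, hqj, hq⟩ : ∃ q < j, f q = f p := by
    by_cases hps : f p + 1 < s
    · exact ⟨f p + 1, by omega, by
        have := hd.apply_of_lt_first hf.injOn hmin (i := f p + 1) (by omega) hps (by omega)
        omega⟩
    · exact ⟨f p + 2, by omega, by
        have := hd.apply_of_first_lt_of_lt hf hs1 hs (i := f p + 2)
          (by omega) (by omega) (by omega)
        omega⟩
  have := hf.injOn (mem_Iio.mpr (by omega)) (mem_Iio.mpr hpn) hq
  omega

theorem exists_reduction (hd : DisplacementsIn n j f) (hf : BijOn f (Iio n) (Iio n))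
    (hmin : ∀ i, 1 ≤ i → i < s → f i + 2 ≠ i + j) (hs1 : 1 ≤ s) (hsn : s < n)
    (hs : f s + 2 = s + j) :
    ∃ g : ℕ → ℕ, BijOn g (Iio (n - s)) (Iio (n - s)) ∧ DisplacementsIn (n - s) j g ∧
      g 0 + 2 = j ∧ (∀ t, 1 ≤ t → t + s < j → g t + 1 = t) ∧
      (∀ t, j ≤ t + s → t < n - s → g t + s = f (t + s)) := by
  have hsj := hd.first_lt hf.injOn hmin hsn
  have hfs : f s < n := hf.mapsTo (mem_Iio.mpr hsn)
  set g := fun t => reduceValue s j (f (t + s)) with hg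
  have hshift : MapsTo (· + s) (Iio (n - s)) (Iio n) := fun t ht => by
    simp only [mem_Iio] at ht ⊢; omega
  have hsurvive : MapsTo (f ∘ (· + s)) (Iio (n - s)) {v | s ≤ v + 1 ∧ v + 2 ≠ j} :=
    fun t ht => ⟨hd.first_le_apply_add_one hf.injOn hmin (p := t + s) (by omega) (hshift ht),
      hd.apply_ne_of_pos hf.injOn (p := t + s) (by omega) (hshift ht)⟩
  have hinj : InjOn g (Iio (n - s)) :=
    (injOn_reduceValue hsj).comp (hf.injOn.comp (add_left_injective s).injOn hshift) hsurvive
  have hmaps : MapsTo g (Iio (n - s)) (Iio (n - s)) := fun t ht => by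
    have : f (t + s) < n := hf.mapsTo (hshift ht)
    simp only [hg, reduceValue, mem_Iio] at ht ⊢
    split_ifs <;> omega
  have h0 : g 0 + 2 = j := by
    simp only [hg, reduceValue, zero_add]
    split_ifs <;> omega
  have hmid : ∀ t, 1 ≤ t → t + s < j → g t + 1 = t := fun t ht htj => by
    have := hd.apply_of_first_lt_of_lt hf hs1 hs (i := t + s) (by omega) htj (by omega)
    simp only [hg, reduceValue]
    split_ifs <;> omega
  have htail : ∀ t, j ≤ t + s → t < n - s → g t + s = f (t + s) := fun t hjt ht => by
    have := hd.le_apply_add_one_of_le hf hmin hs1 hs hjt (by omega)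
    simp only [hg, reduceValue]
    split_ifs <;> omega
  refine ⟨g, ((finite_Iio _).injOn_iff_bijOn_of_mapsTo hmaps).mp hinj, fun t ht => ?_, h0,
    hmid, htail⟩
  rcases Nat.eq_zero_or_pos t with rfl | ht0
  · omega
  by_cases htj : t + s < j
  · have := hmid t ht0 htj
    omega
  · have := htail t (by omega) ht
    rcases hd (t + s) (by omega) with h | h | h <;> omega

end DisplacementsIn

theorem stmt19_general (n j : ℕ) (π : Equiv.Perm (Fin n))
    (hd : ∀ i : Fin n,
      (((π i : Fin n) : ℕ) : ℤ) - ((i : ℕ) : ℤ) ∈ ({-2, -1, (j : ℤ) - 2} : Set ℤ))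
    (r : ℕ) (hr2 : 2 ≤ r) (hrn : r - 1 < n)
    (hr : (((π ⟨r - 1, hrn⟩ : Fin n) : ℕ) : ℤ) - ((r - 1 : ℕ) : ℤ) = (j : ℤ) - 2)
    (hmin : ∀ i (hi : i < n), 1 ≤ i → i < r - 1 →
      (((π ⟨i, hi⟩ : Fin n) : ℕ) : ℤ) - (i : ℤ) ≠ (j : ℤ) - 2) :
    ∃ π' : Equiv.Perm (Fin (n - r + 1)),
      (∀ i : Fin (n - r + 1),
        (((π' i : Fin (n - r + 1)) : ℕ) : ℤ) - ((i : ℕ) : ℤ)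
          ∈ ({-2, -1, (j : ℤ) - 2} : Set ℤ)) ∧
      (∀ h0 : 0 < n - r + 1,
        (((π' ⟨0, h0⟩ : Fin (n - r + 1)) : ℕ) : ℤ) = (j : ℤ) - 2) ∧
      (∀ i (hi : i < n - r + 1), 1 ≤ i → i ≤ j - r →
        (((π' ⟨i, hi⟩ : Fin (n - r + 1)) : ℕ) : ℤ) - (i : ℤ) = -1) ∧
      (∀ i (hi : i < n - r + 1), j - r + 1 ≤ i → ∀ hi' : i + r - 1 < n,
        (((π' ⟨i, hi⟩ : Fin (n - r + 1)) : ℕ) : ℤ) - (i : ℤ)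
          = (((π ⟨i + r - 1, hi'⟩ : Fin n) : ℕ) : ℤ) - ((i + r - 1 : ℕ) : ℤ)) := by
  have hdisp : DisplacementsIn n j π.natExtend := fun i hi => by
    rw [π.natExtend_of_lt hi, ← DisplacementsIn.natCast_sub_natCast_mem_iff]
    exact hd ⟨i, hi⟩
  have hfirst : ∀ i, 1 ≤ i → i < r - 1 → π.natExtend i + 2 ≠ i + j := fun i h1 hi => by
    have := hmin i (by omega) h1 hi
    rw [π.natExtend_of_lt (by omega)]
    omega
  obtain ⟨g, hg, hgd, hg0, hgmid, hgtail⟩ := hdisp.exists_reduction π.bijOn_natExtend hfirst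
    (by omega) hrn (by rw [π.natExtend_of_lt hrn]; omega)
  rw [show n - (r - 1) = n - r + 1 by omega] at hg hgd
  refine ⟨.ofBijOn hg, fun i => ?_, fun _ => ?_, fun i hi h1 hij => ?_, fun i hi hij hi' => ?_⟩
  · rw [Equiv.Perm.ofBijOn_apply_val, DisplacementsIn.natCast_sub_natCast_mem_iff]
    exact hgd i i.2
  · simp only [Equiv.Perm.ofBijOn_apply_val]
    omega
  · have := hgmid i h1 (by omega)
    simp only [Equiv.Perm.ofBijOn_apply_val]
    omega
  · have := hgtail i (by omega) (by omega)
    rw [show i + (r - 1) = i + r - 1 by omega, π.natExtend_of_lt hi'] at this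
    simp only [Equiv.Perm.ofBijOn_apply_val]
    omega

/-- Reduction lemma. Let `π` be a permutation of `{1,…,n}` (modelled on `Fin n`,
positions 1-indexed via `p ↦ p - 1`) with all displacements in `{−2, −1, j−2}`,
`j ≥ 3`, and let `r > 1` be the smallest 1-indexed position with displacement
`j − 2`. Then deleting the first `r − 1` positions and relabeling yields a
permutation `π'` of `{1,…,n−r+1}` with all displacements in `{−2, −1, j−2}`,
whose displacement list begins with `j − 2`, followed by `j − r` entries equal to
`−1`, and thereafter agrees with the tail of the displacement list of `π`
(namely `d'(p) = d(p + r − 1)` for `p > j − r + 1`). -/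
theorem stmt19 (n j : ℕ) (hj : 3 ≤ j) (π : Equiv.Perm (Fin n))
    (hd : ∀ i : Fin n,
      (((π i : Fin n) : ℕ) : ℤ) - ((i : ℕ) : ℤ) ∈ ({-2, -1, (j : ℤ) - 2} : Set ℤ))
    (r : ℕ) (hr2 : 2 ≤ r) (hrn : r - 1 < n)
    (hr : (((π ⟨r - 1, hrn⟩ : Fin n) : ℕ) : ℤ) - ((r - 1 : ℕ) : ℤ) = (j : ℤ) - 2)
    (hmin : ∀ i (hi : i < n), 1 ≤ i → i < r - 1 →
      (((π ⟨i, hi⟩ : Fin n) : ℕ) : ℤ) - (i : ℤ) ≠ (j : ℤ) - 2) :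
    ∃ π' : Equiv.Perm (Fin (n - r + 1)),
      (∀ i : Fin (n - r + 1),
        (((π' i : Fin (n - r + 1)) : ℕ) : ℤ) - ((i : ℕ) : ℤ)
          ∈ ({-2, -1, (j : ℤ) - 2} : Set ℤ)) ∧
      (∀ h0 : 0 < n - r + 1,
        (((π' ⟨0, h0⟩ : Fin (n - r + 1)) : ℕ) : ℤ) = (j : ℤ) - 2) ∧
      (∀ i (hi : i < n - r + 1), 1 ≤ i → i ≤ j - r →
        (((π' ⟨i, hi⟩ : Fin (n - r + 1)) : ℕ) : ℤ) - (i : ℤ) = -1) ∧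
      (∀ i (hi : i < n - r + 1), j - r + 1 ≤ i → ∀ hi' : i + r - 1 < n,
        (((π' ⟨i, hi⟩ : Fin (n - r + 1)) : ℕ) : ℤ) - (i : ℤ)
          = (((π ⟨i + r - 1, hi'⟩ : Fin n) : ℕ) : ℤ) - ((i + r - 1 : ℕ) : ℤ)) :=
  stmt19_general n j π hd r hr2 hrn hr hmin
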